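/- arXiv:2406.11722 — 2 statements merged into one kernel-verified Lean document; each statement's English description precedes it below -/
import Mathlib

section
/- Let E be an aligned metric space in which every interval [a,b] is compact, X a closed subset of E, x, z ∈ X, and y ∈ [x,z]. Then either y ∈ X, or both [x,y) and (y,z] intersect the inner boundary ρX. -/
def itv {E : Type*} [MetricSpace E] (a b : E) : Set E :=
  {p | dist a p + dist p b = dist a b}

def MSBtw {E : Type*} [MetricSpace E] (a b c : E) : Prop :=
  dist a b + dist b c = dist a c ∧ a ≠ b ∧ b ≠ c

def Aligned (E : Type*) [MetricSpace E] : Prop :=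
  ∀ n : ℕ, 1 ≤ n → ∀ x : ℕ → E,
    (∀ i, 0 < i → i < n → MSBtw (x (i - 1)) (x i) (x (i + 1))) →
    itv (x 0) (x n) = ⋃ i ∈ Finset.range n, itv (x i) (x (i + 1))

/-- Adjacency within the subset `X`. -/
def AdjIn {E : Type*} [MetricSpace E] (X : Set E) (x y : E) : Prop :=
  x ∈ X ∧ y ∈ X ∧ x ≠ y ∧ ¬ ∃ p ∈ X, MSBtw x p y

def innerBdry {E : Type*} [MetricSpace E] (X : Set E) : Set E :=
  {x | ∃ y, AdjIn X x y}

lemma itv_left {E : Type*} [MetricSpace E] (a b : E) : a ∈ itv a b := by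
  simp [itv]

lemma itv_right {E : Type*} [MetricSpace E] (a b : E) : b ∈ itv a b := by
  simp [itv]

lemma itv_symm {E : Type*} [MetricSpace E] {a b p : E} (h : p ∈ itv a b) :
    p ∈ itv b a := by
  simp only [itv, Set.mem_setOf_eq] at *
  rw [dist_comm b p, dist_comm p a, dist_comm b a]
  linarith

lemma itv_chain {E : Type*} [MetricSpace E] {x y z p : E}
    (hy : y ∈ itv x z) (hp : p ∈ itv x y) : p ∈ itv x z ∧ y ∈ itv p z := by
  simp only [itv, Set.mem_setOf_eq] at *
  have h1 : dist p z ≤ dist p y + dist y z := dist_triangle _ _ _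
  have h2 : dist x z ≤ dist x p + dist p z := dist_triangle _ _ _
  constructor <;> linarith

lemma msbtw_symm {E : Type*} [MetricSpace E] {a b c : E} (h : MSBtw a b c) :
    MSBtw c b a := by
  obtain ⟨h1, h2, h3⟩ := h
  refine ⟨?_, h3.symm, h2.symm⟩
  rw [dist_comm c b, dist_comm b a, dist_comm c a]; linarith

theorem stmt_10 {E : Type*} [MetricSpace E] (hE : Aligned E)
    (hcpt : ∀ a b : E, IsCompact (itv a b))
    (X : Set E) (hX : IsClosed X) (x z : E) (hx : x ∈ X) (hz : z ∈ X)
    (y : E) (hy : y ∈ itv x z) :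
    y ∈ X ∨
      ((∃ p ∈ innerBdry X, p ∈ itv x y ∧ p ≠ y) ∧
       (∃ q ∈ innerBdry X, q ∈ itv y z ∧ q ≠ y)) := by
  by_cases hyX : y ∈ X
  · exact Or.inl hyX
  right
  -- minimizer a on X ∩ [x,y]
  have hK1 : IsCompact (X ∩ itv x y) := (hcpt x y).inter_left hX
  have hK2 : IsCompact (X ∩ itv y z) := (hcpt y z).inter_left hX
  have hne1 : (X ∩ itv x y).Nonempty := ⟨x, hx, itv_left x y⟩
  have hne2 : (X ∩ itv y z).Nonempty := ⟨z, hz, itv_right y z⟩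
  obtain ⟨a, ha, hamin⟩ := hK1.exists_isMinOn hne1
    (continuous_dist.comp (continuous_id.prodMk continuous_const)).continuousOn
    (f := fun p => dist p y)
  obtain ⟨b, hb, hbmin⟩ := hK2.exists_isMinOn hne2
    (continuous_dist.comp (continuous_id.prodMk continuous_const)).continuousOn
    (f := fun p => dist p y)
  obtain ⟨haX, haI⟩ := ha
  obtain ⟨hbX, hbI⟩ := hb
  have hay : a ≠ y := fun h => hyX (h ▸ haX)
  have hby : b ≠ y := fun h => hyX (h ▸ hbX)
  -- y ∈ itv a z
  have hyaz : y ∈ itv a z := (itv_chain hy haI).2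
  -- y ∈ itv a b
  have hyab : y ∈ itv a b := by
    have h1 : y ∈ itv z a := itv_symm hyaz
    have h2 : b ∈ itv z y := itv_symm hbI
    exact itv_symm (itv_chain h1 h2).2
  have hbtw : MSBtw a y b := ⟨hyab, hay, hby.symm⟩
  -- alignment with chain a, y, b
  set xs : ℕ → E := fun i => if i = 0 then a else if i = 1 then y else b with hxs
  have halign := hE 2 (by norm_num) xs (by
    intro i hi hi2
    interval_cases i
    simpa [hxs] using hbtw)
  have hsplit : itv a b = itv a y ∪ itv y b := by
    rw [Set.union_comm]
    have : itv (xs 0) (xs 2) = ⋃ i ∈ Finset.range 2, itv (xs i) (xs (i + 1)) := halign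
    simpa [hxs, Finset.mem_range, Set.iUnion_subtype, Finset.range_add_one] using this
  -- a and b are adjacent in X
  have hab : a ≠ b := by
    intro h
    subst h
    have := hyab
    simp only [itv, Set.mem_setOf_eq, dist_self] at this
    have : dist a y = 0 := by
      have := dist_comm y a ▸ this
      linarith [dist_nonneg (x := a) (y := y)]
    exact hay (dist_eq_zero.mp ((dist_comm a y) ▸ this)).symm
  have hadj : AdjIn X a b := by
    refine ⟨haX, hbX, hab, ?_⟩
    rintro ⟨p, hpX, hp1, hp2, hp3⟩
    have hpab : p ∈ itv a b := hp1
    rw [hsplit] at hpab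
    cases hpab with
    | inl hpay =>
      have hpxy : p ∈ itv x y := itv_symm (itv_chain (itv_symm haI) (itv_symm hpay)).1
      have hle : dist a y ≤ dist p y := hamin ⟨hpX, hpxy⟩
      have : dist a p + dist p y = dist a y := hpay
      have hpos : 0 < dist a p := dist_pos.mpr hp2
      linarith
    | inr hpyb =>
      have hpyz : p ∈ itv y z := (itv_chain hbI hpyb).1
      have hle : dist b y ≤ dist p y := hbmin ⟨hpX, hpyz⟩
      have h1 : dist y p + dist p b = dist y b := hpyb
      have hpos : 0 < dist p b := dist_pos.mpr hp3
      have h2 : dist b y = dist y b := dist_comm b y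
      have h3 : dist p y = dist y p := dist_comm p y
      linarith
    
  have hadj' : AdjIn X b a := by
    obtain ⟨h1, h2, h3, h4⟩ := hadj
    refine ⟨h2, h1, h3.symm, ?_⟩
    rintro ⟨p, hpX, hp⟩
    exact h4 ⟨p, hpX, msbtw_symm hp⟩
  exact ⟨⟨a, ⟨b, hadj⟩, haI, hay⟩, ⟨b, ⟨a, hadj'⟩, hbI, hby⟩⟩
end

section
/- Let E be an aligned metric space with compact closed intervals, X ⊆ E closed, and A ⊆ X. Then either conv(A) ⊆ X, or conv(A) ∩ ρX ≠ ∅, where conv(A) is the convex hull of A in E. -/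
/-- Metric convexity: a set containing the interval between any two of its points. -/
def MConvex {E : Type*} [MetricSpace E] (S : Set E) : Prop :=
  ∀ x ∈ S, ∀ y ∈ S, itv x y ⊆ S

/-- The metric convex hull of `A` in `E`. -/
def mconv {E : Type*} [MetricSpace E] (A : Set E) : Set E :=
  ⋂₀ {S | MConvex S ∧ A ⊆ S}

lemma key_lemma {E : Type*} [MetricSpace E] (hE : Aligned E)
    (hcpt : ∀ a b : E, IsCompact (itv a b)) {X : Set E} (hX : IsClosed X)
    {x y p : E} (hx : x ∈ X) (hy : y ∈ X) (hp : p ∈ itv x y) (hpX : p ∉ X) :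
    ∃ u ∈ itv x y, u ∈ innerBdry X := by
  have hpxy : dist x p + dist p y = dist x y := hp
  obtain ⟨u, ⟨hu1, hu2⟩, hmax⟩ :=
    ((hcpt x p).inter_right hX).exists_isMaxOn
      ⟨x, by simp [itv], hx⟩
      ((continuous_const.dist continuous_id).continuousOn)
  obtain ⟨v, ⟨hv1, hv2⟩, hmin⟩ :=
    ((hcpt p y).inter_right hX).exists_isMinOn
      ⟨y, by simp [itv], hy⟩
      ((continuous_const.dist continuous_id).continuousOn)
  have h1 : dist x u + dist u p = dist x p := hu1
  have h2 : dist p v + dist v y = dist p y := hv1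
  have hxv : dist x v = dist x p + dist p v := by
    have t1 := dist_triangle x p v
    have t2 := dist_triangle x v y
    linarith
  have huv : dist u v = dist u p + dist p v := by
    have t1 := dist_triangle u p v
    have t2 := dist_triangle x u v
    linarith
  have hup : u ≠ p := by rintro rfl; exact hpX hu2
  have hpv : p ≠ v := by rintro rfl; exact hpX hv2
  have hMS : MSBtw u p v := ⟨huv.symm, hup, hpv⟩
  have huxy : u ∈ itv x y := by
    have t1 := dist_triangle u p y
    have t2 := dist_triangle x u y
    show dist x u + dist u y = dist x y
    linarith
  have hune : u ≠ v := by
    rintro rfl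
    apply hup
    have hd : dist u u = 0 := dist_self u
    have hc : dist p u = dist u p := dist_comm p u
    have : dist u p = 0 := by linarith
    exact (eq_of_dist_eq_zero this).symm ▸ rfl
  refine ⟨u, huxy, v, hu2, hv2, hune, ?_⟩
  rintro ⟨w, hwX, hwuv, hwu, hwv⟩
  -- alignment: itv u v = itv u p ∪ itv p v
  have hsplit : itv u v = itv u p ∪ itv p v := by
    have h := hE 2 (by norm_num) (fun i => if i = 0 then u else if i = 1 then p else v)
      (by
        intro i hi1 hi2
        interval_cases i
        simpa using hMS)
    rw [Set.union_comm]; simpa [Finset.range_add_one] using h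
  have hw : w ∈ itv u v := hwuv
  rw [hsplit] at hw
  rcases hw with hw | hw
  · -- w ∈ itv u p
    have hw' : dist u w + dist w p = dist u p := hw
    have hwxp : w ∈ itv x p := by
      have t1 := dist_triangle x u w
      have t2 := dist_triangle x w p
      show dist x w + dist w p = dist x p
      linarith
    have hle : dist x w ≤ dist x u := hmax ⟨hwxp, hwX⟩
    have hpos : 0 < dist u w := dist_pos.mpr hwu
    have t2 := dist_triangle x w p
    have hwxp' : dist x w + dist w p = dist x p := hwxp
    linarith
  · -- w ∈ itv p v
    have hw' : dist p w + dist w v = dist p v := hw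
    have hwpy : w ∈ itv p y := by
      have t1 := dist_triangle w v y
      have t2 := dist_triangle p w y
      show dist p w + dist w y = dist p y
      linarith
    have hle : dist x v ≤ dist x w := hmin ⟨hwpy, hwX⟩
    have hpos : 0 < dist w v := dist_pos.mpr hwv
    have t1 := dist_triangle x p w
    linarith

theorem stmt_11 {E : Type*} [MetricSpace E] (hE : Aligned E)
    (hcpt : ∀ a b : E, IsCompact (itv a b))
    (X : Set E) (hX : IsClosed X) (A : Set E) (hA : A ⊆ X) :
    mconv A ⊆ X ∨ (mconv A ∩ innerBdry X).Nonempty := by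
  by_cases hB : (mconv A ∩ innerBdry X).Nonempty
  · exact Or.inr hB
  · left
    have hmc : MConvex (mconv A) := by
      intro a ha b hb q hq S hS
      exact hS.1 a (ha S hS) b (hb S hS) hq
    have hAm : A ⊆ mconv A := fun a ha S hS => hS.2 ha
    have hT : MConvex (mconv A ∩ X) := by
      rintro a ⟨ham, haX⟩ b ⟨hbm, hbX⟩ q hq
      refine ⟨hmc a ham b hbm hq, ?_⟩
      by_contra hqX
      obtain ⟨u, huab, huB⟩ := key_lemma hE hcpt hX haX hbX hq hqX
      exact hB ⟨u, hmc a ham b hbm huab, huB⟩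
    intro q hq
    exact (hq (mconv A ∩ X) ⟨hT, fun a ha => ⟨hAm ha, hA ha⟩⟩).2
end
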